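/- arXiv:0907.3082 — 2 statements merged into one kernel-verified Lean document; each statement's English description precedes it below -/
import Mathlib

section
/- Let m be an infinite cardinal and let Π be a profinite group such that (i) Π is projective and (ii) every non-trivial finite split embedding problem for Π has exactly m proper solutions. Then the set of open normal subgroups of Π has cardinality m, and every non-trivial finite embedding problem for Π (not necessarily split) has exactly m proper solutions. -/
open Cardinal

universe u

/-- Continuity of a map into a set carrying the discrete topology. -/
def ContinuousToDiscrete {A B : Type*} [TopologicalSpace A] (f : A → B) : Prop :=
  ∀ s : Set B, IsOpen (f ⁻¹' s)

/-!
Applying the split hypothesis to the problems `Γ → 1` shows that every non-trivial finite group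
is the image of exactly `m` continuous epimorphisms of `Π`; summing over the finitely many
subgroups of a finite group `Γ` bounds the continuous homomorphisms `Π → Γ` by `m`. Every open
normal subgroup is the kernel of a continuous map to some `Perm (Fin n)`, which gives at most `m`
of them, and continuous epimorphisms onto a group of order two are determined by their kernels,
which gives at least `m`. For a non-split problem `(α, f)`, projectivity gives a weak solution
`l`; pulling `f` back along `range l ↪ Γ` yields a split problem whose `m` proper solutions
project injectively to proper solutions of `(α, f)`.
-/

open Function Pointwise

section ContinuousToDiscrete

variable {A B C : Type*} [TopologicalSpace A]

theorem ContinuousToDiscrete.of_subsingleton [Subsingleton B] (f : A → B) :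
    ContinuousToDiscrete f := fun s => by
  rcases s.eq_empty_or_nonempty with rfl | hs
  · exact isOpen_empty
  · rw [hs.eq_univ]
    exact isOpen_univ

theorem ContinuousToDiscrete.of_comp {f : A → B} {g : B → C} (hg : Injective g)
    (h : ContinuousToDiscrete (g ∘ f)) : ContinuousToDiscrete f := fun s => by
  simpa only [Set.preimage_comp, hg.preimage_image] using h (g '' s)

variable [Group A] [Group B] [Group C] {l : A →* B}

theorem ContinuousToDiscrete.monoidHom_comp (hl : ContinuousToDiscrete l) (g : B →* C) :
    ContinuousToDiscrete (g.comp l) :=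
  fun s => hl (g ⁻¹' s)

theorem ContinuousToDiscrete.rangeRestrict (hl : ContinuousToDiscrete l) :
    ContinuousToDiscrete l.rangeRestrict :=
  .of_comp Subtype.val_injective hl

theorem ContinuousToDiscrete.isOpen_ker (hl : ContinuousToDiscrete l) :
    IsOpen (l.ker : Set A) :=
  hl {1}

theorem MonoidHom.continuousToDiscrete_iff_isOpen_ker [SeparatelyContinuousMul A] (l : A →* B) :
    ContinuousToDiscrete l ↔ IsOpen (l.ker : Set A) := by
  refine ⟨ContinuousToDiscrete.isOpen_ker, fun hker s => isOpen_iff_forall_mem_open.2 ?_⟩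
  intro x hx
  refine ⟨x • (l.ker : Set A), ?_, hker.leftCoset x, ⟨1, l.ker.one_mem, mul_one x⟩⟩
  rintro _ ⟨k, hk, rfl⟩
  simpa [Set.mem_preimage, smul_eq_mul, map_mul, (l.mem_ker).1 hk] using hx

end ContinuousToDiscrete

theorem Cardinal.mk_sigma_le_of_countable {ι : Type u} [Countable ι] {S : ι → Type u}
    {m : Cardinal.{u}} (hm : ℵ₀ ≤ m) (h : ∀ i, #(S i) ≤ m) : #(Σ i, S i) ≤ m :=
  calc #(Σ i, S i) = sum fun i => #(S i) := mk_sigma S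
    _ ≤ sum fun _ : ι => m := sum_le_sum _ _ h
    _ = #ι * m := sum_const' ι m
    _ ≤ m := mul_le_of_le hm (mk_le_aleph0.trans hm) le_rfl

theorem MonoidHom.eq_of_ker_eq_of_card_eq_two {A Γ : Type*} [Group A] [Group Γ]
    (hΓ : Nat.card Γ = 2) {l l' : A →* Γ} (h : l.ker = l'.ker) : l = l' := by
  ext x
  have hx : l x = 1 ↔ l' x = 1 := by rw [← mem_ker, h, mem_ker]
  by_cases h1 : l x = 1
  · rw [h1, hx.1 h1]
  · exact ((Nat.card_eq_two_iff' 1).1 hΓ).unique h1 (hx.not.1 h1)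

theorem exists_injective_monoidHom_perm_fin (G : Type*) [Group G] [Finite G] :
    ∃ n : ℕ, ∃ φ : G →* Equiv.Perm (Fin n), Injective φ := by
  obtain ⟨n, ⟨e⟩⟩ := Finite.exists_equiv_fin G
  exact ⟨n, e.permCongrHom.toMonoidHom.comp (MulAction.toPermHom G G),
    e.permCongrHom.injective.comp MulAction.toPerm_injective⟩

namespace MonoidHom

variable {Γ G H : Type*} [Group Γ] [Group G] [Group H] (f : Γ →* G) (β : H →* G)

def pullback : Subgroup (Γ × H) :=
  (f.comp (fst Γ H)).eqLocus (β.comp (snd Γ H))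

def pullbackFst : f.pullback β →* Γ := (fst Γ H).comp (f.pullback β).subtype

def pullbackSnd : f.pullback β →* H := (snd Γ H).comp (f.pullback β).subtype

theorem comp_pullbackFst : f.comp (f.pullbackFst β) = β.comp (f.pullbackSnd β) :=
  ext fun x => x.2

variable {f β}

theorem pullbackFst_surjective (hβ : Surjective β) : Surjective (f.pullbackFst β) := fun γ =>
  let ⟨h, hh⟩ := hβ (f γ)
  ⟨⟨(γ, h), hh.symm⟩, rfl⟩

theorem pullbackSnd_surjective (hf : Surjective f) : Surjective (f.pullbackSnd β) := fun h =>
  let ⟨γ, hγ⟩ := hf (β h)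
  ⟨⟨(γ, h), hγ⟩, rfl⟩

theorem pullbackSnd_ker_ne_bot (hf : f.ker ≠ ⊥) : (f.pullbackSnd β).ker ≠ ⊥ := by
  obtain ⟨⟨k, hk⟩, hk1⟩ := Subgroup.ne_bot_iff_exists_ne_one.1 hf
  have hmem : ((k, 1) : Γ × H) ∈ f.pullback β := by
    change f k = β 1
    rw [hk, map_one]
  exact Subgroup.ne_bot_iff_exists_ne_one.2
    ⟨⟨⟨_, hmem⟩, rfl⟩, fun h => hk1 (Subtype.ext (congrArg (fun x => x.1.1.1) h))⟩

theorem exists_pullbackSnd_comp_eq_id {σ : H →* Γ} (hσ : f.comp σ = β) :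
    ∃ s : H →* f.pullback β, (f.pullbackSnd β).comp s = id H :=
  ⟨(σ.prod (id H)).codRestrict _ fun h => DFunLike.congr_fun hσ h, rfl⟩

theorem pullback_hom_ext {P : Type*} [Group P] {μ ν : P →* f.pullback β}
    (hfst : (f.pullbackFst β).comp μ = (f.pullbackFst β).comp ν)
    (hsnd : (f.pullbackSnd β).comp μ = (f.pullbackSnd β).comp ν) : μ = ν :=
  ext fun x => Subtype.ext (Prod.ext (DFunLike.congr_fun hfst x) (DFunLike.congr_fun hsnd x))

end MonoidHom

section EmbeddingProblems

variable {P G Γ H : Type u} [Group P] [TopologicalSpace P] [Group G] [Group Γ] [Group H]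

def properSolutions (α : P →* G) (f : Γ →* G) : Set (P →* Γ) :=
  {l | ContinuousToDiscrete l ∧ Surjective l ∧ f.comp l = α}

theorem card_properSolutions_pullbackSnd_le {α : P →* G} {f : Γ →* G} {β : H →* G}
    (hβ : Surjective β) {α' : P →* H} (hα' : β.comp α' = α) :
    #(properSolutions α' (f.pullbackSnd β)) ≤ #(properSolutions α f) := by
  refine mk_le_of_injective (f := fun μ => ⟨(f.pullbackFst β).comp μ.1,
    μ.2.1.monoidHom_comp _, (MonoidHom.pullbackFst_surjective hβ).comp μ.2.2.1, ?_⟩) ?_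
  · rw [← MonoidHom.comp_assoc, MonoidHom.comp_pullbackFst, MonoidHom.comp_assoc, μ.2.2.2, hα']
  · intro μ ν h
    exact Subtype.ext (MonoidHom.pullback_hom_ext (congrArg Subtype.val h)
      (μ.2.2.2.trans ν.2.2.2.symm))

variable (P) in
def HasSplitSolutionCount (m : Cardinal.{u}) : Prop :=
  ∀ (G Γ : Type u) [Group G] [Group Γ] [Finite G] [Finite Γ] (α : P →* G) (f : Γ →* G),
    ContinuousToDiscrete α → Surjective α → Surjective f →
    (∃ s : G →* Γ, f.comp s = MonoidHom.id G) → f.ker ≠ ⊥ → #(properSolutions α f) = m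

variable {m : Cardinal.{u}}

theorem HasSplitSolutionCount.card_continuousSurjective (hsplit : HasSplitSolutionCount P m)
    (Γ : Type u) [Group Γ] [Finite Γ] [Nontrivial Γ] :
    #{l : P →* Γ // ContinuousToDiscrete l ∧ Surjective l} = m := by
  have hker : (1 : Γ →* PUnit).ker ≠ ⊥ := by
    rw [MonoidHom.ker_one]
    exact top_ne_bot
  rw [← hsplit PUnit Γ 1 1 (.of_subsingleton _) (fun _ => ⟨1, rfl⟩) (fun _ => ⟨1, rfl⟩)
    ⟨1, MonoidHom.ext fun _ => rfl⟩ hker]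
  exact mk_congr (Equiv.subtypeEquivRight fun l =>
    ⟨fun h => ⟨h.1, h.2, MonoidHom.ext fun _ => rfl⟩, fun h => ⟨h.1, h.2.1⟩⟩)

theorem HasSplitSolutionCount.le_card_properSolutions (hsplit : HasSplitSolutionCount P m)
    [Finite Γ] {α : P →* G} {f : Γ →* G} (hα : Surjective α) (hf : Surjective f)
    (hker : f.ker ≠ ⊥) {l : P →* Γ} (hl : ContinuousToDiscrete l) (hlα : f.comp l = α) :
    m ≤ #(properSolutions α f) := by
  set β := f.comp l.range.subtype
  have hβ : Surjective β := fun g =>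
    let ⟨x, hx⟩ := hα g
    ⟨l.rangeRestrict x, hx ▸ DFunLike.congr_fun hlα x⟩
  have hβl : β.comp l.rangeRestrict = α := by
    rw [MonoidHom.comp_assoc, l.subtype_comp_rangeRestrict, hlα]
  rw [← hsplit l.range (f.pullback β) l.rangeRestrict (f.pullbackSnd β) hl.rangeRestrict
    l.rangeRestrict_surjective (MonoidHom.pullbackSnd_surjective hf)
    (MonoidHom.exists_pullbackSnd_comp_eq_id rfl) (MonoidHom.pullbackSnd_ker_ne_bot hker)]
  exact card_properSolutions_pullbackSnd_le hβ hβl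

end EmbeddingProblems

section Counting

variable {P : Type u} [Group P] [TopologicalSpace P] {m : Cardinal.{u}}

theorem card_continuousHom_le (hm : ℵ₀ ≤ m)
    (h : ∀ (Γ : Type u) [Group Γ] [Finite Γ] [Nontrivial Γ],
      #{l : P →* Γ // ContinuousToDiscrete l ∧ Surjective l} ≤ m)
    (Γ : Type u) [Group Γ] [Finite Γ] : #{l : P →* Γ // ContinuousToDiscrete l} ≤ m := by
  have hsub (K : Subgroup Γ) : #{l : P →* K // ContinuousToDiscrete l ∧ Surjective l} ≤ m := by
    rcases subsingleton_or_nontrivial K with _ | _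
    · refine (le_one_iff_subsingleton.2 ⟨fun l l' => ?_⟩).trans (one_le_aleph0.trans hm)
      exact Subtype.ext (MonoidHom.ext fun _ => Subsingleton.elim _ _)
    · exact h K
  refine (mk_le_of_surjective (f := fun l : Σ K : Subgroup Γ,
    {l : P →* K // ContinuousToDiscrete l ∧ Surjective l} =>
      ⟨l.1.subtype.comp l.2.1, l.2.2.1.monoidHom_comp _⟩) ?_).trans
    (mk_sigma_le_of_countable hm hsub)
  rintro ⟨l, hl⟩
  exact ⟨⟨l.range, l.rangeRestrict, hl.rangeRestrict, l.rangeRestrict_surjective⟩,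
    Subtype.ext l.subtype_comp_rangeRestrict⟩

theorem card_continuousHom_le_card_openNormal {Γ : Type u} [Group Γ] (hΓ : Nat.card Γ = 2) :
    #{l : P →* Γ // ContinuousToDiscrete l} ≤
      #{N : Subgroup P // IsOpen (N : Set P) ∧ N.Normal} :=
  mk_le_of_injective (f := fun l => ⟨l.1.ker, l.2.isOpen_ker, l.1.normal_ker⟩) fun _ _ h =>
    Subtype.ext (MonoidHom.eq_of_ker_eq_of_card_eq_two hΓ (congrArg Subtype.val h))

variable [IsTopologicalGroup P] [CompactSpace P]

theorem Subgroup.exists_continuousToDiscrete_perm_ker_eq (N : Subgroup P) [N.Normal]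
    (hN : IsOpen (N : Set P)) :
    ∃ n : ℕ, ∃ l : P →* ULift.{u} (Equiv.Perm (Fin n)), ContinuousToDiscrete l ∧ l.ker = N := by
  have := Subgroup.quotient_finite_of_isOpen N hN
  obtain ⟨n, φ, hφ⟩ := exists_injective_monoidHom_perm_fin (P ⧸ N)
  have hker : ((MulEquiv.ulift.symm.toMonoidHom.comp φ).comp (QuotientGroup.mk' N)).ker = N := by
    rw [MonoidHom.ker_comp_of_injective _ _ (MulEquiv.ulift.symm.injective.comp hφ),
      QuotientGroup.ker_mk']
  exact ⟨n, _, (MonoidHom.continuousToDiscrete_iff_isOpen_ker _).2 (by rwa [hker]), hker⟩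

theorem card_openNormal_le (hm : ℵ₀ ≤ m)
    (h : ∀ n : ℕ, #{l : P →* ULift.{u} (Equiv.Perm (Fin n)) // ContinuousToDiscrete l} ≤ m) :
    #{N : Subgroup P // IsOpen (N : Set P) ∧ N.Normal} ≤ m := by
  refine (mk_le_of_surjective (f := fun l : Σ n : ULift.{u} ℕ,
    {l : P →* ULift.{u} (Equiv.Perm (Fin n.down)) // ContinuousToDiscrete l} =>
      ⟨l.2.1.ker, l.2.2.isOpen_ker, l.2.1.normal_ker⟩) ?_).trans
    (mk_sigma_le_of_countable hm fun n => h n.down)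
  rintro ⟨N, hN, hNn⟩
  obtain ⟨n, l, hl, rfl⟩ := N.exists_continuousToDiscrete_perm_ker_eq hN
  exact ⟨⟨⟨n⟩, l, hl⟩, rfl⟩

end Counting

theorem rank_eq_and_embeddingProblem_solutions_of_projective_of_quasiFree_general
    (P : Type u) [Group P] [TopologicalSpace P] [IsTopologicalGroup P]
    [CompactSpace P]
    (m : Cardinal.{u}) (hm : ℵ₀ ≤ m)
    (hproj : ∀ (G Γ : Type u) [Group G] [Group Γ] [Finite G] [Finite Γ]
      (α : P →* G) (f : Γ →* G), ContinuousToDiscrete α → Function.Surjective α →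
      Function.Surjective f →
      ∃ l : P →* Γ, ContinuousToDiscrete l ∧ f.comp l = α)
    (hsplit : ∀ (G Γ : Type u) [Group G] [Group Γ] [Finite G] [Finite Γ]
      (α : P →* G) (f : Γ →* G), ContinuousToDiscrete α → Function.Surjective α →
      Function.Surjective f → (∃ s : G →* Γ, f.comp s = MonoidHom.id G) → f.ker ≠ ⊥ →
      #{l : P →* Γ // ContinuousToDiscrete l ∧ Function.Surjective l ∧ f.comp l = α} = m) :
    #{H : Subgroup P // IsOpen (H : Set P) ∧ H.Normal} = m ∧
    ∀ (G Γ : Type u) [Group G] [Group Γ] [Finite G] [Finite Γ]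
      (α : P →* G) (f : Γ →* G), ContinuousToDiscrete α → Function.Surjective α →
      Function.Surjective f → f.ker ≠ ⊥ →
      #{l : P →* Γ // ContinuousToDiscrete l ∧ Function.Surjective l ∧ f.comp l = α} = m := by
  have hsplit : HasSplitSolutionCount P m := hsplit
  have hsurj := hsplit.card_continuousSurjective
  have hhom := card_continuousHom_le hm fun Γ _ _ _ => (hsurj Γ).le
  have hC₂ : Nat.card (ULift.{u} (Multiplicative (ZMod 2))) = 2 := by simp
  refine ⟨le_antisymm (card_openNormal_le hm fun _ => hhom _) ?_, ?_⟩
  · calc m = #{l : P →* ULift.{u} (Multiplicative (ZMod 2)) //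
            ContinuousToDiscrete l ∧ Surjective l} := (hsurj _).symm
      _ ≤ #{l : P →* ULift.{u} (Multiplicative (ZMod 2)) // ContinuousToDiscrete l} :=
          mk_subtype_mono fun _ hl => hl.1
      _ ≤ _ := card_continuousHom_le_card_openNormal hC₂
  intro G Γ _ _ _ _ α f hαc hα hf hker
  obtain ⟨l, hl, hlα⟩ := hproj G Γ α f hαc hα hf
  exact le_antisymm ((mk_subtype_mono fun _ h => h.1).trans (hhom Γ))
    (hsplit.le_card_properSolutions hα hf hker hl hlα)

/-- If a profinite group `Π` is projective and every non-trivial finite split embedding problem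
for `Π` has exactly `m` proper solutions (`m` an infinite cardinal), then the set of open normal
subgroups of `Π` has cardinality `m` and every non-trivial finite embedding problem (split or
not) has exactly `m` proper solutions. -/
theorem rank_eq_and_embeddingProblem_solutions_of_projective_of_quasiFree
    (P : Type u) [Group P] [TopologicalSpace P] [IsTopologicalGroup P]
    [CompactSpace P] [T2Space P] [TotallyDisconnectedSpace P]
    (m : Cardinal.{u}) (hm : ℵ₀ ≤ m)
    (hproj : ∀ (G Γ : Type u) [Group G] [Group Γ] [Finite G] [Finite Γ]
      (α : P →* G) (f : Γ →* G), ContinuousToDiscrete α → Function.Surjective α →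
      Function.Surjective f →
      ∃ l : P →* Γ, ContinuousToDiscrete l ∧ f.comp l = α)
    (hsplit : ∀ (G Γ : Type u) [Group G] [Group Γ] [Finite G] [Finite Γ]
      (α : P →* G) (f : Γ →* G), ContinuousToDiscrete α → Function.Surjective α →
      Function.Surjective f → (∃ s : G →* Γ, f.comp s = MonoidHom.id G) → f.ker ≠ ⊥ →
      #{l : P →* Γ // ContinuousToDiscrete l ∧ Function.Surjective l ∧ f.comp l = α} = m) :
    #{H : Subgroup P // IsOpen (H : Set P) ∧ H.Normal} = m ∧
    ∀ (G Γ : Type u) [Group G] [Group Γ] [Finite G] [Finite Γ]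
      (α : P →* G) (f : Γ →* G), ContinuousToDiscrete α → Function.Surjective α →
      Function.Surjective f → f.ker ≠ ⊥ →
      #{l : P →* Γ // ContinuousToDiscrete l ∧ Function.Surjective l ∧ f.comp l = α} = m :=
  rank_eq_and_embeddingProblem_solutions_of_projective_of_quasiFree_general P m hm hproj hsplit
end

section
/- Let Π be a projective profinite group such that every finite split embedding problem for Π has a proper solution. Then every finite embedding problem for Π has a proper solution. -/
/-!
Let `λ : Π → Γ` be a weak solution, given by projectivity, and `H = λ(Π)`. The fibre product
`Δ = Γ ×_G H` projects onto `H` with the section `h ↦ (h, h)`, so `(λ : Π → H, Δ → H)` is a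
split embedding problem. A proper solution `μ : Π → Δ` of it, followed by the projection
`Δ → Γ`, is a proper solution of the original problem: that projection is onto because
`H → G` is onto, as `f ∘ λ = α` is.
-/

universe u

namespace ContinuousToDiscrete

variable {A B C : Type*} [TopologicalSpace A] {f : A → B}

theorem comp (g : B → C) (hf : ContinuousToDiscrete f) : ContinuousToDiscrete (g ∘ f) :=
  fun s => hf (g ⁻¹' s)

theorem of_comp_injective {g : B → C} (hg : Function.Injective g)
    (h : ContinuousToDiscrete (g ∘ f)) : ContinuousToDiscrete f := fun s => by
  simpa only [Set.preimage_comp, hg.preimage_image] using h (g '' s)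

end ContinuousToDiscrete

namespace MonoidHom

variable {Γ H G K : Type*} [Group Γ] [Group H] [Group G] [Group K] (f : Γ →* G) (g : H →* G)

abbrev fiberProduct : Subgroup (Γ × H) :=
  (f.comp (fst Γ H)).eqLocus (g.comp (snd Γ H))

namespace fiberProduct

def fst : fiberProduct f g →* Γ := (MonoidHom.fst Γ H).comp (Subgroup.subtype _)

def snd : fiberProduct f g →* H := (MonoidHom.snd Γ H).comp (Subgroup.subtype _)

def lift (a : K →* Γ) (b : K →* H) (h : f.comp a = g.comp b) : K →* fiberProduct f g :=
  (a.prod b).codRestrict _ fun k => DFunLike.congr_fun h k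

theorem comp_fst : f.comp (fst f g) = g.comp (snd f g) :=
  ext fun x => x.2

theorem snd_comp_lift (a : K →* Γ) (b : K →* H) (h : f.comp a = g.comp b) :
    (snd f g).comp (lift f g a b h) = b :=
  rfl

theorem fst_surjective {g : H →* G} (hg : Function.Surjective g) :
    Function.Surjective (fst f g) := fun γ => by
  obtain ⟨h, hh⟩ := hg (f γ)
  exact ⟨⟨(γ, h), hh.symm⟩, rfl⟩

end fiberProduct

end MonoidHom

open MonoidHom in
theorem embeddingProblems_solvable_of_projective_of_split_solvable_general
    (P : Type u) [Group P] [TopologicalSpace P]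
    (hproj : ∀ (G Γ : Type u) [Group G] [Group Γ] [Finite G] [Finite Γ]
      (α : P →* G) (f : Γ →* G), ContinuousToDiscrete α → Function.Surjective α →
      Function.Surjective f →
      ∃ l : P →* Γ, ContinuousToDiscrete l ∧ f.comp l = α)
    (hsplit : ∀ (G Γ : Type u) [Group G] [Group Γ] [Finite G] [Finite Γ]
      (α : P →* G) (f : Γ →* G), ContinuousToDiscrete α → Function.Surjective α →
      Function.Surjective f → (∃ s : G →* Γ, f.comp s = MonoidHom.id G) →
      ∃ l : P →* Γ, ContinuousToDiscrete l ∧ Function.Surjective l ∧ f.comp l = α) :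
    ∀ (G Γ : Type u) [Group G] [Group Γ] [Finite G] [Finite Γ]
      (α : P →* G) (f : Γ →* G), ContinuousToDiscrete α → Function.Surjective α →
      Function.Surjective f →
      ∃ l : P →* Γ, ContinuousToDiscrete l ∧ Function.Surjective l ∧ f.comp l = α := by
  intro G Γ _ _ _ _ α f hαc hαs hfs
  obtain ⟨l, hlc, hlα⟩ := hproj G Γ α f hαc hαs hfs
  set g := f.comp l.range.subtype
  have hgl : g.comp l.rangeRestrict = α := hlα
  have hgs : Function.Surjective g := .of_comp (g := l.rangeRestrict) (by rwa [← coe_comp, hgl])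
  set s := fiberProduct.lift f g l.range.subtype (MonoidHom.id _) rfl
  have hs : (fiberProduct.snd f g).comp s = MonoidHom.id _ := fiberProduct.snd_comp_lift ..
  obtain ⟨μ, hμc, hμs, hμl⟩ := hsplit l.range (fiberProduct f g) l.rangeRestrict
    (fiberProduct.snd f g) (hlc.of_comp_injective Subtype.val_injective)
    l.rangeRestrict_surjective (fun h => ⟨s h, DFunLike.congr_fun hs h⟩) ⟨s, hs⟩
  refine ⟨(fiberProduct.fst f g).comp μ, hμc.comp (fiberProduct.fst f g),
    (fiberProduct.fst_surjective f hgs).comp hμs, ?_⟩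
  rw [← comp_assoc, fiberProduct.comp_fst, comp_assoc, hμl, hgl]

/-- If a profinite group `Π` is projective and every finite split embedding problem for `Π` has
a proper solution, then every finite embedding problem for `Π` has a proper solution. -/
theorem embeddingProblems_solvable_of_projective_of_split_solvable
    (P : Type u) [Group P] [TopologicalSpace P] [IsTopologicalGroup P]
    [CompactSpace P] [T2Space P] [TotallyDisconnectedSpace P]
    (hproj : ∀ (G Γ : Type u) [Group G] [Group Γ] [Finite G] [Finite Γ]
      (α : P →* G) (f : Γ →* G), ContinuousToDiscrete α → Function.Surjective α →
      Function.Surjective f →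
      ∃ l : P →* Γ, ContinuousToDiscrete l ∧ f.comp l = α)
    (hsplit : ∀ (G Γ : Type u) [Group G] [Group Γ] [Finite G] [Finite Γ]
      (α : P →* G) (f : Γ →* G), ContinuousToDiscrete α → Function.Surjective α →
      Function.Surjective f → (∃ s : G →* Γ, f.comp s = MonoidHom.id G) →
      ∃ l : P →* Γ, ContinuousToDiscrete l ∧ Function.Surjective l ∧ f.comp l = α) :
    ∀ (G Γ : Type u) [Group G] [Group Γ] [Finite G] [Finite Γ]
      (α : P →* G) (f : Γ →* G), ContinuousToDiscrete α → Function.Surjective α →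
      Function.Surjective f →
      ∃ l : P →* Γ, ContinuousToDiscrete l ∧ Function.Surjective l ∧ f.comp l = α :=
  embeddingProblems_solvable_of_projective_of_split_solvable_general P hproj hsplit
end
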